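/- arXiv:1804.10986 — 2 statements merged into one kernel-verified Lean document; each statement's English description precedes it below -/
import Mathlib

section
/- For d ≥ 2 and σ² = d − 1, the number of lattice points (ℓₓ, ℓₜ) ∈ ℕ² weighted by 2^{ℓₜ + (d−1)ℓₓ} in the anisotropic sparse grid index set {(ℓₓ, ℓₜ) : σℓₓ + ℓₜ/σ ≤ L}, i.e., N_L = ∑_{(ℓₓ,ℓₜ): σℓₓ + ℓₜ/σ ≤ L} 2^{ℓₜ + (d−1)ℓₓ}, satisfies N_L ≤ C · 2^{Lσ²}·(L+1) for a constant C depending only on d. -/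
/-!
Multiplying the constraint `σ ℓₓ + ℓₜ / σ ≤ L` by `σ` turns it into `(d-1) ℓₓ + ℓₜ ≤ σ L`,
so every admissible weight `2^(ℓₜ + (d-1) ℓₓ)` lies on a diagonal `ℓₜ + (d-1) ℓₓ = e` with
`e ≤ N := ⌊σ L⌋`. For fixed `ℓₓ ≤ L` the weights along `ℓₜ` form a geometric series bounded
by `2^(N+1)`, and `N ≤ (d-1) L` since `σ ≤ σ² = d-1`; the `L+1` choices of `ℓₓ` give the
logarithmic factor.
-/

open Finset

lemma sum_range_two_pow_add_le (k m : ℕ) : ∑ b ∈ range m, (2 : ℝ) ^ (b + k) ≤ 2 ^ (m + k) := by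
  have hgeom : ∑ b ∈ range m, (2 : ℝ) ^ b = 2 ^ m - 1 := by
    rw [geom_sum_eq (by norm_num)]; norm_num
  simp only [pow_add, ← sum_mul, hgeom]
  nlinarith [pow_pos (two_pos (α := ℝ)) k]

lemma sum_range_ite_two_pow_add_le (k N : ℕ) :
    ∑ b ∈ range (N + 1), (if b + k ≤ N then (2 : ℝ) ^ (b + k) else 0) ≤ 2 ^ (N + 1) := by
  have hfilter : (range (N + 1)).filter (fun b => b + k ≤ N) = range (N + 1 - k) := by
    ext b; simp only [mem_filter, mem_range]; omega
  rw [← sum_filter, hfilter]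
  rcases le_or_gt k (N + 1) with hk | hk
  · simpa only [Nat.sub_add_cancel hk] using sum_range_two_pow_add_le k (N + 1 - k)
  · simp [Nat.sub_eq_zero_of_le hk.le]

lemma tsum_ite_two_pow_le (c L N : ℕ) (S : ℕ × ℕ → Prop) [DecidablePred S]
    (hS : ∀ p, S p → p.1 ≤ L ∧ p.2 + c * p.1 ≤ N) :
    ∑' p : ℕ × ℕ, (if S p then (2 : ℝ) ^ (p.2 + c * p.1) else 0) ≤ (L + 1) * 2 ^ (N + 1) := by
  have hsupp : ∀ p ∉ range (L + 1) ×ˢ range (N + 1),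
      (if S p then (2 : ℝ) ^ (p.2 + c * p.1) else 0) = 0 := by
    intro p hp
    refine if_neg fun h => hp ?_
    have := hS p h
    simp only [mem_product, mem_range]; omega
  rw [tsum_eq_sum hsupp, sum_product]
  calc _ ≤ ∑ a ∈ range (L + 1), ∑ b ∈ range (N + 1),
        (if b + c * a ≤ N then (2 : ℝ) ^ (b + c * a) else 0) := by
        gcongr with a _ b _
        split_ifs with h h'
        exacts [le_rfl, absurd (hS _ h).2 h', by positivity, le_rfl]
    _ ≤ ∑ _a ∈ range (L + 1), (2 : ℝ) ^ (N + 1) :=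
        sum_le_sum fun a _ => sum_range_ite_two_pow_add_le (c * a) N
    _ = (L + 1) * 2 ^ (N + 1) := by simp

lemma mul_add_div_le_iff {σ x y L : ℝ} (hσ : 0 < σ) :
    σ * x + y / σ ≤ L ↔ σ ^ 2 * x + y ≤ σ * L := by
  rw [← mul_le_mul_iff_of_pos_left hσ]
  field_simp

section SparseIndex

variable {σ : ℝ} {c : ℕ}

lemma sparse_index_bounds (hσ : 1 ≤ σ) (hσc : σ ^ 2 = c) {L a b : ℕ}
    (h : σ * a + b / σ ≤ L) : a ≤ L ∧ b + c * a ≤ ⌊σ * L⌋₊ := by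
  have hb : (0 : ℝ) ≤ b / σ := by positivity
  have hdiag := (mul_add_div_le_iff (by linarith)).mp h
  rw [hσc] at hdiag
  refine ⟨?_, Nat.le_floor ?_⟩
  · exact_mod_cast (show (a : ℝ) ≤ L by nlinarith [(a.cast_nonneg : (0 : ℝ) ≤ a)])
  · push_cast; linarith

lemma floor_mul_le_mul (hσ : 1 ≤ σ) (hσc : σ ^ 2 = c) (L : ℕ) : ⌊σ * L⌋₊ ≤ c * L := by
  apply Nat.floor_le_of_le
  push_cast
  gcongr
  nlinarith

end SparseIndex

theorem stmt8 (d : ℕ) (hd : 2 ≤ d) (σ : ℝ) (hσ : σ = Real.sqrt ((d : ℝ) - 1)) :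
    ∃ C > (0 : ℝ), ∀ L : ℕ,
      (∑' p : ℕ × ℕ,
        if σ * p.1 + p.2 / σ ≤ (L : ℝ) then
          (2 : ℝ) ^ (p.2 + (d - 1) * p.1) else 0) ≤
      C * (2 : ℝ) ^ ((L : ℝ) * σ ^ 2) * ((L : ℝ) + 1) := by
  have hd1 : ((d - 1 : ℕ) : ℝ) = (d : ℝ) - 1 := by
    rw [Nat.cast_sub (by omega), Nat.cast_one]
  have hσc : σ ^ 2 = ((d - 1 : ℕ) : ℝ) := by
    rw [hσ, hd1, Real.sq_sqrt (by linarith [(show (2 : ℝ) ≤ d by exact_mod_cast hd)])]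
  have hσ1 : 1 ≤ σ := by
    rw [hσ, ← hd1, Real.one_le_sqrt]; exact_mod_cast (show 1 ≤ d - 1 by omega)
  refine ⟨2, two_pos, fun L => ?_⟩
  calc _ ≤ ((L : ℝ) + 1) * 2 ^ (⌊σ * L⌋₊ + 1) :=
        tsum_ite_two_pow_le _ L _ _ fun p hp => sparse_index_bounds hσ1 hσc hp
    _ ≤ ((L : ℝ) + 1) * 2 ^ ((d - 1) * L + 1) := by
        gcongr
        · exact one_le_two
        · exact floor_mul_le_mul hσ1 hσc L
    _ = _ := by
        rw [hσc, ← Nat.cast_mul, mul_comm (L : ℕ), Real.rpow_natCast]; ring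
end

section
/- In the combination technique, if Π_{i,j} denotes the L²-orthogonal projection onto nested spaces X_i ⊗ Y_j with X_{i} ⊆ X_{i+1}, Y_j ⊆ Y_{j+1}, and if φ lies in the sparse space ⊕_{i+j ≤ L} W_i ⊗ Z_j (where X_i = ⊕_{k≤i} W_k and Y_j = ⊕_{k≤j} Z_k are orthogonal decompositions), then φ = ∑_{l=0}^{L} Π_{l, L−l} φ − ∑_{l=1}^{L} Π_{l−1, L−l} φ. -/
/-!
A vector of `K (a, b)` is fixed by the projection onto `sgX K i j` when `a ≤ i` and `b ≤ j`,
and is killed by it otherwise, since it is then orthogonal to every `K p` spanning `sgX K i j`.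
So on `K (a, b)` the combination operator acts as multiplication by the number of diagonal
indices `l` with `a ≤ l ≤ L - b` minus the number of subdiagonal ones with `a + 1 ≤ l ≤ L - b`,
which is `1` as soon as `a + b ≤ L`. By linearity it is the identity on the sparse space.
-/

open scoped InnerProductSpace

/-- The full tensor-product space `X_i ⊗ Y_j`, modelled as the closure of the span of the
pairwise orthogonal subspaces `K (a, b)` (representing `W_a ⊗ Z_b`) with `a ≤ i`, `b ≤ j`. -/
noncomputable def sgX {E : Type*} [NormedAddCommGroup E] [InnerProductSpace ℝ E]
    (K : ℕ × ℕ → Submodule ℝ E) (i j : ℕ) : Submodule ℝ E :=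
  (⨆ p ∈ {p : ℕ × ℕ | p.1 ≤ i ∧ p.2 ≤ j}, K p).topologicalClosure

section OrthogonalFamily

variable {𝕜 E ι : Type*} [RCLike 𝕜] [NormedAddCommGroup E] [InnerProductSpace 𝕜 E]
  {K : ι → Submodule 𝕜 E} {S : Set ι} [(⨆ q ∈ S, K q).topologicalClosure.HasOrthogonalProjection]
  {p : ι} {x : E}

theorem Submodule.starProjection_closure_biSup_eq_self (hp : p ∈ S) (hx : x ∈ K p) :
    (⨆ q ∈ S, K q).topologicalClosure.starProjection x = x :=
  starProjection_eq_self_iff.2 <| le_topologicalClosure _ (le_biSup K hp hx)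

theorem Submodule.starProjection_closure_biSup_eq_zero (hK : Pairwise fun p q => K p ⟂ K q)
    (hp : p ∉ S) (hx : x ∈ K p) :
    (⨆ q ∈ S, K q).topologicalClosure.starProjection x = 0 := by
  have hortho : K p ⟂ ⨆ q ∈ S, K q := by
    simp only [isOrtho_iSup_right]
    exact fun q hq => hK fun hpq => hp (hpq ▸ hq)
  rw [starProjection_apply_eq_zero_iff, orthogonal_closure]
  exact hortho hx

end OrthogonalFamily

open Finset

theorem sum_diagonal_sub_sum_subdiagonal_ite {M : Type*} [AddCommGroup M] (x : M)
    {a b L : ℕ} (hab : a + b ≤ L) :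
    (∑ l ∈ range (L + 1), if a ≤ l ∧ b ≤ L - l then x else 0) -
      (∑ l ∈ Icc 1 L, if a ≤ l - 1 ∧ b ≤ L - l then x else 0) = x := by
  have hdiag : {l ∈ range (L + 1) | a ≤ l ∧ b ≤ L - l} = Icc a (L - b) := by
    ext l; simp only [mem_filter, mem_range, mem_Icc]; omega
  have hsubdiag : {l ∈ Icc 1 L | a ≤ l - 1 ∧ b ≤ L - l} = Icc (a + 1) (L - b) := by
    ext l; simp only [mem_filter, mem_Icc]; omega
  rw [← sum_filter, ← sum_filter, hdiag, hsubdiag, ← insert_Icc_add_one_left_eq_Icc (by omega),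
    sum_insert (by simp), add_sub_cancel_right]

section Combination

variable {E : Type*} [NormedAddCommGroup E] [InnerProductSpace ℝ E]
  {K : ℕ × ℕ → Submodule ℝ E} [∀ i j, (sgX K i j).HasOrthogonalProjection]

theorem starProjection_sgX_apply_of_mem (hK : Pairwise fun p q => K p ⟂ K q)
    (i j : ℕ) {a b : ℕ} {x : E} (hx : x ∈ K (a, b)) :
    (sgX K i j).starProjection x = if a ≤ i ∧ b ≤ j then x else 0 := by
  -- `sgX` is not reducible, so instance search needs the unfolded form spelled out.
  have : (⨆ p ∈ {p : ℕ × ℕ | p.1 ≤ i ∧ p.2 ≤ j}, K p).topologicalClosure.HasOrthogonalProjection :=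
    ‹∀ i j, (sgX K i j).HasOrthogonalProjection› i j
  split_ifs with hab
  · exact Submodule.starProjection_closure_biSup_eq_self hab hx
  · exact Submodule.starProjection_closure_biSup_eq_zero hK hab hx

variable (K) in
noncomputable def combinationOp (L : ℕ) : E →L[ℝ] E :=
  ∑ l ∈ range (L + 1), (sgX K l (L - l)).starProjection -
    ∑ l ∈ Icc 1 L, (sgX K (l - 1) (L - l)).starProjection

theorem combinationOp_apply_of_mem (hK : Pairwise fun p q => K p ⟂ K q) {L a b : ℕ}
    (hab : a + b ≤ L) {x : E} (hx : x ∈ K (a, b)) : combinationOp K L x = x := by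
  simp only [combinationOp, _root_.sub_apply, _root_.sum_apply,
    starProjection_sgX_apply_of_mem hK _ _ hx]
  exact sum_diagonal_sub_sum_subdiagonal_ite x hab

theorem biSup_le_eqLocus_combinationOp (hK : Pairwise fun p q => K p ⟂ K q) (L : ℕ) :
    ⨆ p ∈ {p : ℕ × ℕ | p.1 + p.2 ≤ L}, K p ≤
      LinearMap.eqLocus (combinationOp K L).toLinearMap LinearMap.id :=
  iSup₂_le fun _ hp _ hx => combinationOp_apply_of_mem hK hp hx

end Combination

theorem stmt17_general {E : Type*} [NormedAddCommGroup E] [InnerProductSpace ℝ E]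
    (K : ℕ × ℕ → Submodule ℝ E)
    (horth : ∀ p q : ℕ × ℕ, p ≠ q → ∀ x ∈ K p, ∀ y ∈ K q, ⟪x, y⟫_ℝ = 0)
    [∀ i j, CompleteSpace (sgX K i j)]
    (L : ℕ) (φ : E) (hφ : φ ∈ ⨆ p ∈ {p : ℕ × ℕ | p.1 + p.2 ≤ L}, K p) :
    φ = ∑ l ∈ Finset.range (L + 1),
          (Submodule.orthogonalProjection (sgX K l (L - l)) φ : E) -
        ∑ l ∈ Finset.Icc 1 L,
          (Submodule.orthogonalProjection (sgX K (l - 1) (L - l)) φ : E) := by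
  have hK : Pairwise fun p q => K p ⟂ K q := fun p q hpq =>
    Submodule.isOrtho_iff_inner_eq.2 (horth p q hpq)
  have hfix : combinationOp K L φ = φ := biSup_le_eqLocus_combinationOp hK L hφ
  simp only [combinationOp, _root_.sub_apply, _root_.sum_apply,
    Submodule.starProjection_apply] at hfix
  exact hfix.symm

theorem stmt17 {E : Type*} [NormedAddCommGroup E] [InnerProductSpace ℝ E]
    [CompleteSpace E] (K : ℕ × ℕ → Submodule ℝ E)
    (horth : ∀ p q : ℕ × ℕ, p ≠ q → ∀ x ∈ K p, ∀ y ∈ K q, ⟪x, y⟫_ℝ = 0)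
    [∀ i j, CompleteSpace (sgX K i j)]
    (L : ℕ) (φ : E) (hφ : φ ∈ ⨆ p ∈ {p : ℕ × ℕ | p.1 + p.2 ≤ L}, K p) :
    φ = ∑ l ∈ Finset.range (L + 1),
          (Submodule.orthogonalProjection (sgX K l (L - l)) φ : E) -
        ∑ l ∈ Finset.Icc 1 L,
          (Submodule.orthogonalProjection (sgX K (l - 1) (L - l)) φ : E) :=
  stmt17_general K horth L φ hφ
end
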